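/- Let α ∈ (0,2], c > 0, p ≥ 2, and let (a_j)_{j≥0} be nonnegative numbers. Then ∫₀^T (Σ_{j=0}^∞ e^{−c2^{αj}t} 2^{2βj} a_j²)^{p/2} dt ≤ C Σ_{j=0}^∞ 2^{−αj} 2^{pβj} a_j^p, for a constant C = C(α, β, p, c) independent of (a_j) and T. -/

import Mathlib

/-!
Write `λ_j = c 2^{αj}`, `b_j = 2^{2βj} a_j²` and `q = p/2 ≥ 1`. Hölder's inequality with the
weights `λ_j^{1/q} e^{-λ_j t}` gives
`(Σ e^{-λ_j t} b_j)^q ≤ (Σ λ_j^{1/q} e^{-λ_j t})^{q-1} · Σ λ_j^{1/q-1} e^{-λ_j t} b_j^q`.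
As `λ_{j+1} = 2^α λ_j`, the first factor is dominated by `∫₀^∞ u^{1/q-1} e^{-ut} du ∝ t^{-1/q}`,
so the right side is `≲ Σ t^{1/q-1} e^{-λ_j t} λ_j^{1/q-1} b_j^q`, and integrating in `t` with
`∫₀^∞ t^{1/q-1} e^{-λt} dt = Γ(1/q) λ^{-1/q}` leaves `Σ λ_j^{-1} b_j^q`.
-/

open MeasureTheory Set Real
open scoped ENNReal

theorem ENNReal.rpow_tsum_mul_le {ι : Type*} (w f : ι → ℝ≥0∞) {q : ℝ} (hq : 1 ≤ q) :
    (∑' i, w i * f i) ^ q ≤ (∑' i, w i) ^ (q - 1) * ∑' i, w i * f i ^ q := by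
  have hq0 : 0 < q := by linarith
  have hholder :
      ∑' i, w i * f i ≤ (∑' i, w i) ^ (1 - q⁻¹) * (∑' i, w i * f i ^ q) ^ q⁻¹ := by
    rw [ENNReal.tsum_eq_iSup_sum]
    refine iSup_le fun s ↦ (ENNReal.inner_le_weight_mul_Lp_of_nonneg s hq w f).trans ?_
    gcongr
    · exact sub_nonneg.2 (inv_le_one_of_one_le₀ hq)
    · exact ENNReal.sum_le_tsum s
    · exact ENNReal.sum_le_tsum s
  calc (∑' i, w i * f i) ^ q
      ≤ ((∑' i, w i) ^ (1 - q⁻¹) * (∑' i, w i * f i ^ q) ^ q⁻¹) ^ q :=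
        ENNReal.rpow_le_rpow hholder hq0.le
    _ = (∑' i, w i) ^ (q - 1) * ∑' i, w i * f i ^ q := by
        rw [ENNReal.mul_rpow_of_nonneg _ _ hq0.le, ← ENNReal.rpow_mul, ← ENNReal.rpow_mul,
          inv_mul_cancel₀ hq0.ne', ENNReal.rpow_one, sub_mul, inv_mul_cancel₀ hq0.ne', one_mul]

theorem ENNReal.rpow_tsum_mul_le_of_weight {ι : Type*} (Λ E b : ι → ℝ≥0∞) {q : ℝ}
    (hq : 1 ≤ q) (hΛ0 : ∀ i, Λ i ≠ 0) (hΛtop : ∀ i, Λ i ≠ ⊤) :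
    (∑' i, E i * b i) ^ q ≤
      (∑' i, Λ i ^ q⁻¹ * E i) ^ (q - 1) * ∑' i, Λ i ^ (q⁻¹ - 1) * E i * b i ^ q := by
  have hq0 : 0 < q := by linarith
  have hsplit (i : ι) : E i * b i = Λ i ^ q⁻¹ * E i * (Λ i ^ (-q⁻¹) * b i) := by
    rw [mul_mul_mul_comm, ← ENNReal.rpow_add _ _ (hΛ0 i) (hΛtop i), add_neg_cancel,
      ENNReal.rpow_zero, one_mul]
  have hpow (i : ι) :
      Λ i ^ q⁻¹ * E i * (Λ i ^ (-q⁻¹) * b i) ^ q = Λ i ^ (q⁻¹ - 1) * E i * b i ^ q := by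
    rw [ENNReal.mul_rpow_of_nonneg _ _ hq0.le, ← ENNReal.rpow_mul, neg_mul,
      inv_mul_cancel₀ hq0.ne', sub_eq_add_neg, ENNReal.rpow_add _ _ (hΛ0 i) (hΛtop i)]
    ring
  calc (∑' i, E i * b i) ^ q
      = (∑' i, Λ i ^ q⁻¹ * E i * (Λ i ^ (-q⁻¹) * b i)) ^ q := by simp_rw [← hsplit]
    _ ≤ _ := ENNReal.rpow_tsum_mul_le _ _ hq
    _ = _ := by simp_rw [hpow]

theorem lintegral_rpow_mul_exp_neg_mul_Ioi {a b : ℝ} (ha : 0 < a) (hb : 0 < b) :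
    ∫⁻ t in Ioi 0, ENNReal.ofReal (t ^ (a - 1) * exp (-(b * t))) =
      ENNReal.ofReal ((1 / b) ^ a * Gamma a) := by
  have hint : IntegrableOn (fun t : ℝ ↦ t ^ (a - 1) * exp (-(b * t))) (Ioi 0) := by
    simpa [rpow_one] using
      integrableOn_rpow_mul_exp_neg_mul_rpow (s := a - 1) (by linarith) one_pos hb
  rw [← integral_rpow_mul_exp_neg_mul_Ioi ha hb, ofReal_integral_eq_lintegral_ofReal hint]
  filter_upwards [ae_restrict_mem measurableSet_Ioi] with t ht
  exact mul_nonneg (rpow_nonneg (le_of_lt ht) _) (exp_nonneg _)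

theorem lintegral_Ioc_rpow_sub_one {γ a b : ℝ} (hγ : 0 < γ) (ha : 0 ≤ a) (hab : a ≤ b) :
    ∫⁻ u in Ioc a b, ENNReal.ofReal (u ^ (γ - 1)) = ENNReal.ofReal ((b ^ γ - a ^ γ) / γ) := by
  have hint : IntervalIntegrable (fun u : ℝ ↦ u ^ (γ - 1)) volume a b :=
    intervalIntegral.intervalIntegrable_rpow' (by linarith)
  rw [← ofReal_integral_eq_lintegral_ofReal
      ((intervalIntegrable_iff_integrableOn_Ioc_of_le hab).1 hint),
    ← intervalIntegral.integral_of_le hab, integral_rpow (Or.inl (by linarith)), sub_add_cancel]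
  filter_upwards [ae_restrict_mem measurableSet_Ioc] with u hu
  exact rpow_nonneg (ha.trans hu.1.le) _

theorem rpow_mul_exp_neg_le_lintegral {r γ t x : ℝ} (hr : 1 < r) (hγ : 0 < γ) (ht : 0 ≤ t)
    (hx : 0 < x) :
    ENNReal.ofReal (x ^ γ * exp (-(x * t))) ≤ ENNReal.ofReal (γ / (1 - r ^ (-γ))) *
      ∫⁻ u in Ioc (x / r) x, ENNReal.ofReal (u ^ (γ - 1) * exp (-(u * t))) := by
  have hr0 : 0 < r := one_pos.trans hr
  have hxr : x / r ≤ x := div_le_self hx.le hr.le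
  have hrγ : r ^ γ - 1 ≠ 0 := (sub_pos.2 (one_lt_rpow hr hγ)).ne'
  have hrγ' : 0 < 1 - r ^ (-γ) :=
    sub_pos.2 (rpow_lt_one_of_one_lt_of_neg hr (neg_lt_zero.2 hγ))
  have hsplit : x ^ γ * exp (-(x * t)) =
      γ / (1 - r ^ (-γ)) * ((x ^ γ - (x / r) ^ γ) / γ * exp (-(x * t))) := by
    rw [div_rpow hx.le hr0.le, rpow_neg hr0.le]
    field_simp
  calc ENNReal.ofReal (x ^ γ * exp (-(x * t)))
      = ENNReal.ofReal (γ / (1 - r ^ (-γ))) * ((∫⁻ u in Ioc (x / r) x,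
          ENNReal.ofReal (u ^ (γ - 1))) * ENNReal.ofReal (exp (-(x * t)))) := by
        rw [lintegral_Ioc_rpow_sub_one hγ (div_pos hx hr0).le hxr, ← ENNReal.ofReal_mul,
          ← ENNReal.ofReal_mul, hsplit]
        · positivity
        · exact div_nonneg (sub_nonneg.2 (rpow_le_rpow (div_pos hx hr0).le hxr hγ.le)) hγ.le
    _ ≤ _ := by
        rw [← lintegral_mul_const' _ _ ENNReal.ofReal_ne_top]
        refine mul_le_mul' le_rfl (setLIntegral_mono' measurableSet_Ioc fun u hu ↦ ?_)
        have hu0 : 0 ≤ u := (div_pos hx hr0).le.trans hu.1.le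
        rw [← ENNReal.ofReal_mul (rpow_nonneg hu0 _)]
        gcongr
        exact hu.2

theorem tsum_rpow_mul_exp_neg_le {r c γ t : ℝ} (hr : 1 < r) (hc : 0 < c) (hγ : 0 < γ)
    (ht : 0 < t) :
    ∑' j : ℕ, ENNReal.ofReal ((c * r ^ j) ^ γ * exp (-(c * r ^ j * t))) ≤
      ENNReal.ofReal (γ / (1 - r ^ (-γ)) * Gamma γ * t ^ (-γ)) := by
  have hr0 : 0 < r := one_pos.trans hr
  set K := γ / (1 - r ^ (-γ))
  have hK : 0 ≤ K :=
    div_nonneg hγ.le (sub_nonneg.2 (rpow_le_one_of_one_le_of_nonpos hr.le (neg_nonpos.2 hγ.le)))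
  set I : ℕ → Set ℝ := fun j ↦ Ioc (c * r ^ j / r) (c * r ^ j)
  have hdisj : Pairwise (Function.onFun Disjoint I) := by
    have hmono : Monotone fun j : ℕ ↦ c * r ^ j / r := fun i j hij ↦ by
      dsimp only
      gcongr
      exact hr.le
    convert hmono.pairwise_disjoint_on_Ioc_succ using 3 with j
    simp [I, pow_succ, mul_div_assoc, hr0.ne']
  have hsub : (⋃ j, I j) ⊆ Ioi 0 :=
    iUnion_subset fun j u hu ↦ (by positivity : 0 < c * r ^ j / r).trans hu.1
  calc ∑' j : ℕ, ENNReal.ofReal ((c * r ^ j) ^ γ * exp (-(c * r ^ j * t)))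
      ≤ ∑' j : ℕ, ENNReal.ofReal K *
          ∫⁻ u in I j, ENNReal.ofReal (u ^ (γ - 1) * exp (-(u * t))) :=
        ENNReal.tsum_le_tsum fun j ↦ rpow_mul_exp_neg_le_lintegral hr hγ ht.le (by positivity)
    _ = ENNReal.ofReal K * ∫⁻ u in ⋃ j, I j, ENNReal.ofReal (u ^ (γ - 1) * exp (-(t * u))) := by
        simp_rw [ENNReal.tsum_mul_left, mul_comm _ t]
        rw [lintegral_iUnion (fun j ↦ measurableSet_Ioc) hdisj]
    _ ≤ ENNReal.ofReal K * ∫⁻ u in Ioi 0, ENNReal.ofReal (u ^ (γ - 1) * exp (-(t * u))) :=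
        mul_le_mul' le_rfl (lintegral_mono_set hsub)
    _ = ENNReal.ofReal (K * Gamma γ * t ^ (-γ)) := by
        rw [lintegral_rpow_mul_exp_neg_mul_Ioi hγ ht, ← ENNReal.ofReal_mul hK, one_div,
          inv_rpow ht.le, ← rpow_neg ht.le]
        ring_nf

theorem rpow_tsum_exp_mul_le {r c q t : ℝ} (hr : 1 < r) (hc : 0 < c) (hq : 1 ≤ q) (ht : 0 < t)
    (b : ℕ → ℝ≥0∞) :
    (∑' j : ℕ, ENNReal.ofReal (exp (-(c * r ^ j * t))) * b j) ^ q ≤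
      ∑' j : ℕ, ENNReal.ofReal ((q⁻¹ / (1 - r ^ (-q⁻¹)) * Gamma q⁻¹) ^ (q - 1)) *
        ENNReal.ofReal (t ^ (q⁻¹ - 1) * exp (-(c * r ^ j * t))) *
        (ENNReal.ofReal (c * r ^ j) ^ (q⁻¹ - 1) * b j ^ q) := by
  have hq0 : 0 < q := by linarith
  set K := q⁻¹ / (1 - r ^ (-q⁻¹)) * Gamma q⁻¹
  have hK : 0 ≤ K := by
    have : r ^ (-q⁻¹) ≤ 1 := rpow_le_one_of_one_le_of_nonpos hr.le (by simp [hq0.le])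
    have : 0 ≤ 1 - r ^ (-q⁻¹) := by linarith
    positivity
  have hweight : ∑' j : ℕ, ENNReal.ofReal (c * r ^ j) ^ q⁻¹ *
      ENNReal.ofReal (exp (-(c * r ^ j * t))) ≤ ENNReal.ofReal (K * t ^ (-q⁻¹)) := by
    convert tsum_rpow_mul_exp_neg_le hr hc (inv_pos.2 hq0) ht using 3 with j
    rw [ENNReal.ofReal_rpow_of_pos (by positivity), ← ENNReal.ofReal_mul (by positivity)]
  calc (∑' j : ℕ, ENNReal.ofReal (exp (-(c * r ^ j * t))) * b j) ^ q
      ≤ (∑' j : ℕ, ENNReal.ofReal (c * r ^ j) ^ q⁻¹ *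
            ENNReal.ofReal (exp (-(c * r ^ j * t)))) ^ (q - 1) *
          ∑' j : ℕ, ENNReal.ofReal (c * r ^ j) ^ (q⁻¹ - 1) *
            ENNReal.ofReal (exp (-(c * r ^ j * t))) * b j ^ q :=
        ENNReal.rpow_tsum_mul_le_of_weight _ _ _ hq (fun j ↦ by simp; positivity)
          (fun j ↦ ENNReal.ofReal_ne_top)
    _ ≤ ENNReal.ofReal (K * t ^ (-q⁻¹)) ^ (q - 1) *
          ∑' j : ℕ, ENNReal.ofReal (c * r ^ j) ^ (q⁻¹ - 1) *
            ENNReal.ofReal (exp (-(c * r ^ j * t))) * b j ^ q := by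
        gcongr
    _ = _ := by
        rw [ENNReal.ofReal_rpow_of_nonneg (by positivity) (by linarith),
          mul_rpow hK (by positivity), ← rpow_mul ht.le, ← ENNReal.tsum_mul_left]
        refine tsum_congr fun j ↦ ?_
        rw [show -q⁻¹ * (q - 1) = q⁻¹ - 1 by field_simp; ring,
          ENNReal.ofReal_mul (p := K ^ (q - 1)) (by positivity),
          ENNReal.ofReal_mul (p := t ^ (q⁻¹ - 1)) (by positivity)]
        ring

theorem lintegral_rpow_tsum_exp_mul_le {r c q : ℝ} (hr : 1 < r) (hc : 0 < c) (hq : 1 ≤ q) :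
    ∃ C > 0, ∀ b : ℕ → ℝ≥0∞,
      ∫⁻ t in Ioi 0, (∑' j : ℕ, ENNReal.ofReal (exp (-(c * r ^ j * t))) * b j) ^ q ≤
        ENNReal.ofReal C * ∑' j : ℕ, (ENNReal.ofReal (c * r ^ j))⁻¹ * b j ^ q := by
  have hq0 : 0 < q := by linarith
  set K := q⁻¹ / (1 - r ^ (-q⁻¹)) * Gamma q⁻¹
  have hK : 0 < K := by
    have : r ^ (-q⁻¹) < 1 := rpow_lt_one_of_one_lt_of_neg hr (by simp [hq0])
    have : 0 < 1 - r ^ (-q⁻¹) := by linarith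
    positivity
  refine ⟨K ^ (q - 1) * Gamma q⁻¹, by positivity, fun b ↦ ?_⟩
  have hterm (j : ℕ) :
      ENNReal.ofReal (K ^ (q - 1)) * ENNReal.ofReal ((1 / (c * r ^ j)) ^ q⁻¹ * Gamma q⁻¹) *
        (ENNReal.ofReal (c * r ^ j) ^ (q⁻¹ - 1) * b j ^ q) =
      ENNReal.ofReal (K ^ (q - 1) * Gamma q⁻¹) * ((ENNReal.ofReal (c * r ^ j))⁻¹ * b j ^ q) := by
    have hpos : 0 < c * r ^ j := by positivity
    rw [one_div, inv_rpow hpos.le, ← rpow_neg hpos.le,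
      ENNReal.ofReal_mul (p := (c * r ^ j) ^ (-q⁻¹)) (by positivity),
      ENNReal.ofReal_mul (p := K ^ (q - 1)) (by positivity), ← ENNReal.ofReal_rpow_of_pos hpos,
      ← ENNReal.rpow_neg_one, show (-1 : ℝ) = -q⁻¹ + (q⁻¹ - 1) by ring,
      ENNReal.rpow_add _ _ (by simpa using hpos) ENNReal.ofReal_ne_top]
    ring
  calc ∫⁻ t in Ioi 0, (∑' j : ℕ, ENNReal.ofReal (exp (-(c * r ^ j * t))) * b j) ^ q
      ≤ ∫⁻ t in Ioi 0, ∑' j : ℕ, ENNReal.ofReal (K ^ (q - 1)) *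
          ENNReal.ofReal (t ^ (q⁻¹ - 1) * exp (-(c * r ^ j * t))) *
          (ENNReal.ofReal (c * r ^ j) ^ (q⁻¹ - 1) * b j ^ q) :=
        setLIntegral_mono' measurableSet_Ioi fun t ht ↦ rpow_tsum_exp_mul_le hr hc hq ht b
    _ = ∑' j : ℕ, ENNReal.ofReal (K ^ (q - 1)) *
          ENNReal.ofReal ((1 / (c * r ^ j)) ^ q⁻¹ * Gamma q⁻¹) *
          (ENNReal.ofReal (c * r ^ j) ^ (q⁻¹ - 1) * b j ^ q) := by
        rw [lintegral_tsum fun j ↦ by fun_prop]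
        refine tsum_congr fun j ↦ ?_
        rw [lintegral_mul_const _ (by fun_prop), lintegral_const_mul' _ _ ENNReal.ofReal_ne_top,
          ← lintegral_rpow_mul_exp_neg_mul_Ioi (inv_pos.2 hq0) (by positivity)]
    _ = _ := by simp_rw [hterm, ENNReal.tsum_mul_left]

/-- the key scalar inequality
`∫₀^T (Σ_j e^{-c2^{αj}t} 2^{2βj} a_j²)^{p/2} dt ≤ C Σ_j 2^{-αj} 2^{pβj} a_j^p`
with `C = C(α, β, p, c)` independent of the sequence `(a_j)` and of `T`. -/
theorem stmt_8 (α β p c : ℝ) (hα : α ∈ Set.Ioc (0:ℝ) 2) (hp : 2 ≤ p) (hc : 0 < c) :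
    ∃ C > 0, ∀ (T : ℝ) (a : ℕ → ℝ), (∀ j, 0 ≤ a j) →
      ∫⁻ t in Set.Ioc (0:ℝ) T,
          (∑' j : ℕ, ENNReal.ofReal
            (Real.exp (-(c * (2:ℝ) ^ (α * (j:ℝ)) * t)) *
              (2:ℝ) ^ (2 * β * (j:ℝ)) * (a j) ^ 2)) ^ (p/2)
        ≤ ENNReal.ofReal C *
          ∑' j : ℕ, ENNReal.ofReal
            ((2:ℝ) ^ (-(α * (j:ℝ))) * (2:ℝ) ^ (p * β * (j:ℝ)) * a j ^ p) := by
  obtain ⟨C, hC, hbound⟩ :=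
    lintegral_rpow_tsum_exp_mul_le (one_lt_rpow one_lt_two hα.1) hc (by linarith : 1 ≤ p / 2)
  refine ⟨C / c, div_pos hC hc, fun T a ha ↦ ?_⟩
  have hgeom (j : ℕ) : (2 : ℝ) ^ (α * j) = (2 ^ α) ^ j := rpow_mul_natCast zero_le_two α j
  have hlhs (t : ℝ) (j : ℕ) :
      ENNReal.ofReal (exp (-(c * 2 ^ (α * j) * t)) * 2 ^ (2 * β * j) * a j ^ 2) =
      ENNReal.ofReal (exp (-(c * (2 ^ α) ^ j * t))) *
        ENNReal.ofReal (2 ^ (2 * β * j) * a j ^ 2) := by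
    rw [mul_assoc, ENNReal.ofReal_mul (exp_nonneg _), hgeom]
  have hrhs (j : ℕ) :
      ENNReal.ofReal (C / c) * ENNReal.ofReal (2 ^ (-(α * j)) * 2 ^ (p * β * j) * a j ^ p) =
      ENNReal.ofReal C * ((ENNReal.ofReal (c * (2 ^ α) ^ j))⁻¹ *
        ENNReal.ofReal (2 ^ (2 * β * j) * a j ^ 2) ^ (p / 2)) := by
    rw [← ENNReal.ofReal_inv_of_pos (by positivity),
      ENNReal.ofReal_rpow_of_nonneg (by positivity) (by linarith),
      ← ENNReal.ofReal_mul (p := (c * (2 ^ α) ^ j)⁻¹) (by positivity),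
      ← ENNReal.ofReal_mul hC.le, ← ENNReal.ofReal_mul (div_pos hC hc).le, ← hgeom,
      mul_rpow (by positivity) (by positivity), ← rpow_mul zero_le_two, ← rpow_natCast,
      ← rpow_mul (ha j), rpow_neg zero_le_two]
    congr 1
    field_simp
    ring_nf
  calc _ ≤ ∫⁻ t in Ioi 0, (∑' j : ℕ, ENNReal.ofReal
          (exp (-(c * 2 ^ (α * j) * t)) * 2 ^ (2 * β * j) * a j ^ 2)) ^ (p / 2) :=
        lintegral_mono_set Ioc_subset_Ioi_self
    _ ≤ _ := by simpa only [hlhs] using hbound _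
    _ = _ := by simp_rw [← ENNReal.tsum_mul_left, hrhs]
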